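/- Let T > 0 and let w : (0,T) × (0,∞) → ℝ be measurable with ∫_0^T ∫_0^∞ |w| dx dt < ∞. Suppose that ∫_0^T ∫_0^∞ w(t,x)(∂_t ψ + ∂_{xx} ψ)(t,x) dx dt = 0 for every function ψ : [0,T] × [0,∞) → ℝ that is C¹ in t and C² in x, is bounded together with ∂_t ψ, ∂_x ψ and ∂_{xx} ψ, and satisfies ψ(t,0) = 0 for all t ∈ [0,T] and ψ(T,x) = 0 for all x ≥ 0. Then w = 0 almost everywhere on (0,T) × (0,∞). -/

import Mathlib

/-!
Testing against `ψ t x = a t * sin (ξ * x)`, where `a` solves `a' = ξ² a + c` backwards from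
`a T = 0`, gives `∂ₜψ + ∂ₓₓψ = c t * sin (ξ * x)`. Hence `∫ c(t) F(t, ξ) dt = 0` for every
continuous `c`, where `F(t, ·)` is the sine transform of `w(t, ·)`, so for almost every `t` the
function `F(t, ·)` vanishes on `ℚ`, and by continuity everywhere. The sine transform is injective
on `L¹(0, ∞)` because the Fourier transform of the odd extension is `-2i` times the sine
transform, and the Fourier transform is injective on `L¹(ℝ)`. Fubini concludes.
-/

open MeasureTheory Real Set FourierTransform
open scoped ContDiff

theorem Complex.exp_mul_I_sub_exp_neg_mul_I (z : ℂ) :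
    exp (z * I) - exp (-z * I) = 2 * I * sin z := by
  linear_combination -I * two_sin z + (exp (z * I) - exp (-z * I)) * I_sq

theorem MeasureTheory.Integrable.ae_eq_zero_of_fourier_eq_zero {V E : Type*}
    [NormedAddCommGroup V] [InnerProductSpace ℝ V] [FiniteDimensional ℝ V]
    [MeasurableSpace V] [BorelSpace V] [NormedAddCommGroup E] [NormedSpace ℂ E] [CompleteSpace E]
    {f : V → E} (hf : Integrable f) (h : 𝓕 f = 0) : f =ᵐ[volume] 0 := by
  have hschwartz : ∀ φ : SchwartzMap V ℂ, ∫ x, φ x • f x = 0 := by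
    intro φ
    set ψ : SchwartzMap V ℂ := 𝓕⁻ φ
    have hψ : 𝓕 (ψ : V → ℂ) = φ := by
      rw [← SchwartzMap.fourier_coe, FourierTransform.fourier_fourierInv_eq]
    have := VectorFourier.integral_bilin_fourierIntegral_eq_flip
      (ContinuousLinearMap.lsmul ℂ ℂ).flip (L := innerₗ V) continuous_fourierChar continuous_inner
      hf (ψ.integrable (μ := volume))
    rw [flip_innerₗ] at this
    change ∫ ξ, ψ ξ • 𝓕 f ξ = ∫ x, 𝓕 (ψ : V → ℂ) x • f x at this
    simpa [hψ, h] using this.symm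
  refine ae_eq_zero_of_integral_contDiff_smul_eq_zero hf.locallyIntegrable fun g hg hgc => ?_
  have hg₁ : HasCompactSupport (Complex.ofRealCLM ∘ g) := hgc.comp_left rfl
  have hg₂ : ContDiff ℝ ∞ (Complex.ofRealCLM ∘ g) := by fun_prop
  simpa [Complex.coe_smul] using hschwartz (hg₁.toSchwartzMap hg₂)

theorem ae_eq_zero_of_integral_mul_sin_eq_zero {h : ℝ → ℝ} (hi : IntegrableOn h (Ioi 0))
    (hsin : ∀ ξ, ∫ x in Ioi 0, h x * sin (ξ * x) = 0) :
    ∀ᵐ x ∂volume.restrict (Ioi 0), h x = 0 := by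
  set u : ℝ → ℂ := (Ioi 0).indicator fun x => (h x : ℂ)
  have hu : Integrable u := IntegrableOn.integrable_indicator hi.ofReal measurableSet_Ioi
  have hexp : ∀ θ : ℝ, Integrable fun v => Complex.exp (↑(θ * v) * Complex.I) * u v :=
    fun θ => hu.bdd_mul (c := 1) (by fun_prop)
      (ae_of_all _ fun v => by rw [Complex.norm_exp_ofReal_mul_I])
  have hodd : ∀ θ : ℝ, ∫ v, Complex.exp (↑(θ * v) * Complex.I) * (u v - u (-v)) = 0 := by
    intro θ
    have hreflect : ∫ v, Complex.exp (↑(θ * v) * Complex.I) * u (-v)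
        = ∫ v, Complex.exp (↑(-θ * v) * Complex.I) * u v := by
      rw [← integral_neg_eq_self]
      simp only [neg_neg, mul_neg, neg_mul]
    calc ∫ v, Complex.exp (↑(θ * v) * Complex.I) * (u v - u (-v))
        = (∫ v, Complex.exp (↑(θ * v) * Complex.I) * u v)
          - ∫ v, Complex.exp (↑(θ * v) * Complex.I) * u (-v) := by
          simp_rw [mul_sub]
          exact integral_sub (hexp θ) (by simpa only [neg_mul_neg] using (hexp (-θ)).comp_neg)
      _ = ∫ v, (Complex.exp (↑(θ * v) * Complex.I) - Complex.exp (↑(-θ * v) * Complex.I))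
            * u v := by
          simp_rw [hreflect, sub_mul]
          exact (integral_sub (hexp θ) (hexp (-θ))).symm
      _ = 2 * Complex.I * ∫ v in Ioi 0, ((h v * sin (θ * v) : ℝ) : ℂ) := by
          rw [← integral_indicator measurableSet_Ioi, ← integral_const_mul]
          congr 1 with v
          rw [neg_mul, Complex.ofReal_neg, Complex.exp_mul_I_sub_exp_neg_mul_I]
          simp only [u, indicator]
          split_ifs <;> push_cast <;> ring
      _ = 0 := by rw [integral_complex_ofReal, hsin]; simp
  have hF : 𝓕 (fun v => u v - u (-v)) = 0 := by
    ext ξ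
    rw [fourier_real_eq_integral_exp_smul, Pi.zero_apply, ← hodd (-2 * π * ξ)]
    congr 1 with v
    ring_nf
  rw [ae_restrict_iff' measurableSet_Ioi]
  filter_upwards [(hu.sub hu.comp_neg).ae_eq_zero_of_fourier_eq_zero hF] with x hx hx0
  have hx0' : ¬ (0 < -x) := by simp only [mem_Ioi] at hx0; linarith
  simpa [u, hx0, hx0'] using hx

theorem continuous_integral_mul_sin {μ : Measure ℝ} {h : ℝ → ℝ} (hh : Integrable h μ) :
    Continuous fun ξ => ∫ x, h x * sin (ξ * x) ∂μ := by
  refine continuous_of_dominated (bound := fun x => ‖h x‖)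
    (fun ξ => hh.1.mul (by fun_prop : Continuous fun x => sin (ξ * x)).aestronglyMeasurable)
    (fun ξ => ae_of_all _ fun x => ?_) hh.norm (ae_of_all _ fun x => by fun_prop)
  rw [norm_mul]
  exact mul_le_of_le_one_right (norm_nonneg _) (abs_sin_le_one _)

theorem exists_eq_zero_and_hasDerivAt_const_mul_add (k T : ℝ) {c : ℝ → ℝ} (hc : Continuous c) :
    ∃ a : ℝ → ℝ, a T = 0 ∧ ∀ t, HasDerivAt a (k * a t + c t) t := by
  set φ : ℝ → ℝ := fun s => exp (-k * s) * c s
  have hφ : Continuous φ := by fun_prop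
  -- variation of constants: `a t = -∫ₜᵀ exp (k (t - s)) c s ds`
  refine ⟨fun t => -(exp (k * t) * ∫ s in t..T, φ s), by simp, fun t => ?_⟩
  have hG : HasDerivAt (fun t => ∫ s in t..T, φ s) (-φ t) t :=
    intervalIntegral.integral_hasDerivAt_left (hφ.intervalIntegrable _ _)
      (hφ.stronglyMeasurableAtFilter _ _) hφ.continuousAt
  refine ((((hasDerivAt_id' t).const_mul k).exp.mul hG).neg).congr_deriv ?_
  have : exp (k * t) * exp (-k * t) = 1 := by rw [← exp_add]; simp
  simp only [φ]
  linear_combination c t * this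

def IsVeryWeakDirichletHeatSolution (T : ℝ) (w : ℝ → ℝ → ℝ) : Prop :=
  ∀ ψ ψt ψx ψxx : ℝ → ℝ → ℝ,
    (∀ t x, t ∈ Set.Icc 0 T → x ∈ Set.Ici (0 : ℝ) →
      HasDerivWithinAt (fun s => ψ s x) (ψt t x) (Set.Icc 0 T) t) →
    (∀ t x, t ∈ Set.Icc 0 T → x ∈ Set.Ici (0 : ℝ) →
      HasDerivWithinAt (fun y => ψ t y) (ψx t x) (Set.Ici 0) x) →
    (∀ t x, t ∈ Set.Icc 0 T → x ∈ Set.Ici (0 : ℝ) →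
      HasDerivWithinAt (fun y => ψx t y) (ψxx t x) (Set.Ici 0) x) →
    ContinuousOn (fun p : ℝ × ℝ => ψ p.1 p.2) (Set.Icc 0 T ×ˢ Set.Ici 0) →
    ContinuousOn (fun p : ℝ × ℝ => ψt p.1 p.2) (Set.Icc 0 T ×ˢ Set.Ici 0) →
    ContinuousOn (fun p : ℝ × ℝ => ψx p.1 p.2) (Set.Icc 0 T ×ˢ Set.Ici 0) →
    ContinuousOn (fun p : ℝ × ℝ => ψxx p.1 p.2) (Set.Icc 0 T ×ˢ Set.Ici 0) →
    (∃ C, ∀ t x, t ∈ Set.Icc 0 T → x ∈ Set.Ici (0 : ℝ) →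
      |ψ t x| ≤ C ∧ |ψt t x| ≤ C ∧ |ψx t x| ≤ C ∧ |ψxx t x| ≤ C) →
    (∀ t ∈ Set.Icc 0 T, ψ t 0 = 0) →
    (∀ x, 0 ≤ x → ψ T x = 0) →
    ∫ t in Set.Ioo 0 T, ∫ x in Set.Ioi (0 : ℝ), w t x * (ψt t x + ψxx t x) = 0

theorem IsCompact.exists_abs_mul_le {K : Set ℝ} (hK : IsCompact K) {f : ℝ → ℝ}
    (hf : ContinuousOn f K) : ∃ M, ∀ t ∈ K, ∀ y, |y| ≤ 1 → |f t * y| ≤ M := by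
  obtain ⟨M, hM⟩ := hK.exists_bound_of_continuousOn hf
  refine ⟨M, fun t ht y hy => ?_⟩
  rw [abs_mul]
  exact (mul_le_of_le_one_right (abs_nonneg _) hy).trans (hM t ht)

theorem IsVeryWeakDirichletHeatSolution.integral_mul_integral_mul_sin_eq_zero {T : ℝ}
    {w : ℝ → ℝ → ℝ} (hw : IsVeryWeakDirichletHeatSolution T w) (ξ : ℝ) {c : ℝ → ℝ}
    (hc : Continuous c) :
    ∫ t in Ioo 0 T, c t * ∫ x in Ioi 0, w t x * sin (ξ * x) = 0 := by
  obtain ⟨a, haT, ha⟩ := exists_eq_zero_and_hasDerivAt_const_mul_add (ξ ^ 2) T hc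
  have ha_cont : Continuous a := continuous_iff_continuousAt.2 fun t => (ha t).continuousAt
  have hsin : ∀ x, HasDerivAt (fun y => sin (ξ * y)) (ξ * cos (ξ * x)) x := fun x =>
    (((hasDerivAt_id' x).const_mul ξ).sin).congr_deriv (by ring)
  have hcos : ∀ x, HasDerivAt (fun y => cos (ξ * y)) (-ξ * sin (ξ * x)) x := fun x =>
    (((hasDerivAt_id' x).const_mul ξ).cos).congr_deriv (by ring)
  have hK : IsCompact (Icc 0 T) := isCompact_Icc
  obtain ⟨M₀, h₀⟩ := hK.exists_abs_mul_le ha_cont.continuousOn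
  obtain ⟨M₁, h₁⟩ := hK.exists_abs_mul_le (f := fun t => ξ ^ 2 * a t + c t) (by fun_prop)
  obtain ⟨M₂, h₂⟩ := hK.exists_abs_mul_le (f := fun t => ξ * a t) (by fun_prop)
  obtain ⟨M₃, h₃⟩ := hK.exists_abs_mul_le (f := fun t => -(ξ ^ 2 * a t)) (by fun_prop)
  have hweak := hw (fun t x => a t * sin (ξ * x)) (fun t x => (ξ ^ 2 * a t + c t) * sin (ξ * x))
    (fun t x => ξ * a t * cos (ξ * x)) (fun t x => -(ξ ^ 2 * a t) * sin (ξ * x))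
    (fun t x _ _ => ((ha t).mul_const _).hasDerivWithinAt)
    (fun t x _ _ => (((hsin x).const_mul (a t)).congr_deriv (by ring)).hasDerivWithinAt)
    (fun t x _ _ => (((hcos x).const_mul (ξ * a t)).congr_deriv (by ring)).hasDerivWithinAt)
    (by fun_prop) (by fun_prop) (by fun_prop) (by fun_prop)
    ⟨|M₀| + |M₁| + |M₂| + |M₃|, fun t x ht _ => by
      have := h₀ t ht _ (abs_sin_le_one (ξ * x))
      have := h₁ t ht _ (abs_sin_le_one (ξ * x))
      have := h₂ t ht _ (abs_cos_le_one (ξ * x))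
      have := h₃ t ht _ (abs_sin_le_one (ξ * x))
      refine ⟨?_, ?_, ?_, ?_⟩ <;>
        linarith [le_abs_self M₀, le_abs_self M₁, le_abs_self M₂, le_abs_self M₃,
          abs_nonneg M₀, abs_nonneg M₁, abs_nonneg M₂, abs_nonneg M₃]⟩
    (fun t _ => by simp) (fun x _ => by simp [haT])
  refine Eq.trans ?_ hweak
  refine setIntegral_congr_fun measurableSet_Ioo fun t _ => ?_
  rw [← integral_const_mul]
  congr 1 with x
  ring

theorem halfline_dirichlet_uniqueness_general (T : ℝ) (w : ℝ → ℝ → ℝ)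
    (hmeas : Measurable (fun p : ℝ × ℝ => w p.1 p.2))
    (hint : IntegrableOn (fun p : ℝ × ℝ => w p.1 p.2) (Set.Ioo 0 T ×ˢ Set.Ioi 0))
    (hw : ∀ ψ ψt ψx ψxx : ℝ → ℝ → ℝ,
      (∀ t x, t ∈ Set.Icc 0 T → x ∈ Set.Ici (0 : ℝ) →
        HasDerivWithinAt (fun s => ψ s x) (ψt t x) (Set.Icc 0 T) t) →
      (∀ t x, t ∈ Set.Icc 0 T → x ∈ Set.Ici (0 : ℝ) →
        HasDerivWithinAt (fun y => ψ t y) (ψx t x) (Set.Ici 0) x) →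
      (∀ t x, t ∈ Set.Icc 0 T → x ∈ Set.Ici (0 : ℝ) →
        HasDerivWithinAt (fun y => ψx t y) (ψxx t x) (Set.Ici 0) x) →
      ContinuousOn (fun p : ℝ × ℝ => ψ p.1 p.2) (Set.Icc 0 T ×ˢ Set.Ici 0) →
      ContinuousOn (fun p : ℝ × ℝ => ψt p.1 p.2) (Set.Icc 0 T ×ˢ Set.Ici 0) →
      ContinuousOn (fun p : ℝ × ℝ => ψx p.1 p.2) (Set.Icc 0 T ×ˢ Set.Ici 0) →
      ContinuousOn (fun p : ℝ × ℝ => ψxx p.1 p.2) (Set.Icc 0 T ×ˢ Set.Ici 0) →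
      (∃ C, ∀ t x, t ∈ Set.Icc 0 T → x ∈ Set.Ici (0 : ℝ) →
        |ψ t x| ≤ C ∧ |ψt t x| ≤ C ∧ |ψx t x| ≤ C ∧ |ψxx t x| ≤ C) →
      (∀ t ∈ Set.Icc 0 T, ψ t 0 = 0) →
      (∀ x, 0 ≤ x → ψ T x = 0) →
      ∫ t in Set.Ioo 0 T, ∫ x in Set.Ioi (0 : ℝ), w t x * (ψt t x + ψxx t x) = 0) :
    ∀ᵐ p ∂(volume.restrict (Set.Ioo 0 T ×ˢ Set.Ioi (0 : ℝ))), w p.1 p.2 = 0 := by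
  have hsol : IsVeryWeakDirichletHeatSolution T w := hw
  set μt := volume.restrict (Ioo 0 T)
  set μx := volume.restrict (Ioi (0 : ℝ))
  have hprod : volume.restrict (Ioo 0 T ×ˢ Ioi 0) = μt.prod μx := by
    rw [Measure.volume_eq_prod, Measure.prod_restrict]
  rw [IntegrableOn, hprod] at hint
  rw [hprod]
  set F : ℝ → ℝ → ℝ := fun ξ t => ∫ x, w t x * sin (ξ * x) ∂μx
  have hF : ∀ ξ, ∀ᵐ t ∂μt, F ξ t = 0 := fun ξ => by
    have hint_sin : Integrable (fun p : ℝ × ℝ => w p.1 p.2 * sin (ξ * p.2)) (μt.prod μx) :=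
      hint.mul_bdd (c := 1) (by fun_prop) (ae_of_all _ fun p => abs_sin_le_one _)
    exact ae_eq_zero_of_integral_contDiff_smul_eq_zero hint_sin.integral_prod_left.locallyIntegrable
      fun g hg _ => hsol.integral_mul_integral_mul_sin_eq_zero ξ hg.continuous
  have hsections : ∀ᵐ t ∂μt, ∀ᵐ x ∂μx, w t x = 0 := by
    filter_upwards [ae_all_iff.2 fun q : ℚ => hF q, hint.prod_right_ae] with t hFt hwt
    have hFt_zero : (fun ξ => F ξ t) = fun _ => 0 :=
      (continuous_integral_mul_sin hwt).ext_on Rat.denseRange_cast continuous_const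
        (by rintro _ ⟨q, rfl⟩; exact hFt q)
    exact ae_eq_zero_of_integral_mul_sin_eq_zero hwt (congrFun hFt_zero)
  exact (Measure.ae_prod_iff_ae_ae (measurableSet_eq_fun hmeas measurable_const)).2 hsections

/-- **Half-line Dirichlet uniqueness.** An integrable very weak solution of the heat
equation on `(0,T) × (0,∞)`, tested against bounded test functions `ψ` (C¹ in `t`,
C² in `x`, with bounded derivatives) vanishing at `x = 0` and at time `T`,
vanishes almost everywhere. -/
theorem halfline_dirichlet_uniqueness (T : ℝ) (hT : 0 < T) (w : ℝ → ℝ → ℝ)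
    (hmeas : Measurable (fun p : ℝ × ℝ => w p.1 p.2))
    (hint : IntegrableOn (fun p : ℝ × ℝ => w p.1 p.2) (Set.Ioo 0 T ×ˢ Set.Ioi 0))
    (hw : ∀ ψ ψt ψx ψxx : ℝ → ℝ → ℝ,
      (∀ t x, t ∈ Set.Icc 0 T → x ∈ Set.Ici (0 : ℝ) →
        HasDerivWithinAt (fun s => ψ s x) (ψt t x) (Set.Icc 0 T) t) →
      (∀ t x, t ∈ Set.Icc 0 T → x ∈ Set.Ici (0 : ℝ) →
        HasDerivWithinAt (fun y => ψ t y) (ψx t x) (Set.Ici 0) x) →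
      (∀ t x, t ∈ Set.Icc 0 T → x ∈ Set.Ici (0 : ℝ) →
        HasDerivWithinAt (fun y => ψx t y) (ψxx t x) (Set.Ici 0) x) →
      ContinuousOn (fun p : ℝ × ℝ => ψ p.1 p.2) (Set.Icc 0 T ×ˢ Set.Ici 0) →
      ContinuousOn (fun p : ℝ × ℝ => ψt p.1 p.2) (Set.Icc 0 T ×ˢ Set.Ici 0) →
      ContinuousOn (fun p : ℝ × ℝ => ψx p.1 p.2) (Set.Icc 0 T ×ˢ Set.Ici 0) →
      ContinuousOn (fun p : ℝ × ℝ => ψxx p.1 p.2) (Set.Icc 0 T ×ˢ Set.Ici 0) →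
      (∃ C, ∀ t x, t ∈ Set.Icc 0 T → x ∈ Set.Ici (0 : ℝ) →
        |ψ t x| ≤ C ∧ |ψt t x| ≤ C ∧ |ψx t x| ≤ C ∧ |ψxx t x| ≤ C) →
      (∀ t ∈ Set.Icc 0 T, ψ t 0 = 0) →
      (∀ x, 0 ≤ x → ψ T x = 0) →
      ∫ t in Set.Ioo 0 T, ∫ x in Set.Ioi (0 : ℝ), w t x * (ψt t x + ψxx t x) = 0) :
    ∀ᵐ p ∂(volume.restrict (Set.Ioo 0 T ×ˢ Set.Ioi (0 : ℝ))), w p.1 p.2 = 0 :=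
  halfline_dirichlet_uniqueness_general T w hmeas hint hw
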